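/- Let G ≤ Sym(Ω), let Fixed be a fixed-point approximator, and for each i ∈ ℕ₀ let Vᵢ be a stack of labelled digraphs on Ω and Fᵢ a list of points of Ω whose pointwise stabiliser in G is contained in Aut(Vᵢ). Define f on stacks by: f(S) = (V_{|S|})^a if some a ∈ G maps F_{|S|} (pointwise, in order) to Fixed(S), and f(S) = the empty stack if no such a exists. Then f is well-defined and (f, f) is a refiner for G, i.e. f(S^g) = f(S)^g for all g ∈ G and all stacks S. -/

import Mathlib

/-- A labelled digraph on vertex set `Ω` with labels in `L`:
`vlabel` gives the label of each vertex, and `alabel p = some l` means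
`p` is an arc with label `l`, while `alabel p = none` means `p` is not an arc. -/
structure LDigraph (Ω L : Type*) where
  vlabel : Ω → L
  alabel : Ω × Ω → Option L

namespace LDigraph

/-- The image `Γ^g` of a labelled digraph under a permutation `g`. -/
def map {Ω L : Type*} (g : Equiv.Perm Ω) (Γ : LDigraph Ω L) : LDigraph Ω L where
  vlabel := fun δ => Γ.vlabel (g⁻¹ δ)
  alabel := fun p => Γ.alabel (g⁻¹ p.1, g⁻¹ p.2)

end LDigraph

/-- A stack of labelled digraphs is a finite list of labelled digraphs. -/
abbrev Stack (Ω L : Type*) := List (LDigraph Ω L)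

/-- The entrywise action `S^g` of a permutation on a stack. -/
def stackMap {Ω L : Type*} (g : Equiv.Perm Ω) (S : Stack Ω L) : Stack Ω L :=
  S.map (LDigraph.map g)

/-- `Iso S T` is the set of permutations inducing an isomorphism from `S` to `T`. -/
def Iso {Ω L : Type*} (S T : Stack Ω L) : Set (Equiv.Perm Ω) :=
  {g | stackMap g S = T}

/-- `Auto S = Iso S S` is the set of permutations inducing automorphisms of `S`. -/
def Auto {Ω L : Type*} (S : Stack Ω L) : Set (Equiv.Perm Ω) := Iso S S

/-- A fixed-point approximator: every entry of `fixedL S` is a fixed point of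
`Auto S`, and `Fixed(S)^g = Fixed(S^g)` for all permutations `g`. -/
structure FixedApprox (Ω L : Type*) where
  fixedL : Stack Ω L → List Ω
  mem_fixed : ∀ S : Stack Ω L, ∀ ω ∈ fixedL S, ∀ g ∈ Auto S, g ω = ω
  equivariant : ∀ (S : Stack Ω L) (g : Equiv.Perm Ω),
    (fixedL S).map g = fixedL (stackMap g S)

/-!
If `a, b ∈ G` both map `F` to `T`, then `b⁻¹ a` fixes `F` pointwise, hence is an automorphism
of `V`, so `V^a = V^b`: the stack `V^a` depends only on the target list `T`. Moving `T` by
`g ∈ G` moves the transporters `a` to `g a`, which gives equivariance; in particular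
whether a transporter exists at all is `G`-invariant.
-/

open Equiv

section StackAction

variable {Ω L : Type*}

lemma stackMap_mul (g h : Perm Ω) (S : Stack Ω L) :
    stackMap (g * h) S = stackMap g (stackMap h S) := by
  simp only [stackMap, List.map_map]
  rfl

@[simp]
lemma length_stackMap (g : Perm Ω) (S : Stack Ω L) : (stackMap g S).length = S.length :=
  List.length_map _

end StackAction

section Transporters

variable {Ω L : Type*} (G : Subgroup (Perm Ω))

def transporters (F T : List Ω) : Set (Perm Ω) :=
  {a | a ∈ G ∧ F.map a = T}

open Classical in
noncomputable def transport (F T : List Ω) (V : Stack Ω L) : Stack Ω L :=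
  if h : (transporters G F T).Nonempty then stackMap h.some V else []

variable {G} {F T : List Ω} {V : Stack Ω L}

lemma mul_mem_transporters_map {g a : Perm Ω} (hg : g ∈ G)
    (ha : a ∈ transporters G F T) : g * a ∈ transporters G F (T.map g) := by
  obtain ⟨haG, hFa⟩ := ha
  refine ⟨mul_mem hg haG, ?_⟩
  rw [← hFa, List.map_map]
  rfl

lemma transporters_map_nonempty_iff {g : Perm Ω} (hg : g ∈ G) :
    (transporters G F (T.map g)).Nonempty ↔ (transporters G F T).Nonempty := by
  refine ⟨fun ⟨b, hb⟩ => ⟨g⁻¹ * b, ?_⟩, fun ⟨a, ha⟩ => ⟨g * a, mul_mem_transporters_map hg ha⟩⟩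
  simpa [List.map_map, Function.comp_def] using mul_mem_transporters_map (inv_mem hg) hb

lemma map_inv_mul_eq_of_mem_transporters {a b : Perm Ω} (ha : a ∈ transporters G F T)
    (hb : b ∈ transporters G F T) : F.map ⇑(b⁻¹ * a) = F := by
  rw [Perm.coe_mul, ← List.map_map, ha.2, ← hb.2, List.map_map]
  simp [Function.comp_def]

lemma stackMap_eq_of_mem_transporters
    (hFV : ∀ g ∈ G, F.map ⇑g = F → g ∈ Auto V) {a b : Perm Ω}
    (ha : a ∈ transporters G F T) (hb : b ∈ transporters G F T) :
    stackMap a V = stackMap b V := by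
  have hauto : stackMap (b⁻¹ * a) V = V :=
    hFV _ (mul_mem (inv_mem hb.1) ha.1) (map_inv_mul_eq_of_mem_transporters ha hb)
  rw [← mul_inv_cancel_left b a, stackMap_mul, hauto]

lemma transport_eq_stackMap (hFV : ∀ g ∈ G, F.map ⇑g = F → g ∈ Auto V) {a : Perm Ω}
    (ha : a ∈ transporters G F T) : transport G F T V = stackMap a V := by
  have h : (transporters G F T).Nonempty := ⟨a, ha⟩
  rw [transport, dif_pos h]
  exact stackMap_eq_of_mem_transporters hFV h.some_mem ha

lemma transport_eq_nil (h : ¬(transporters G F T).Nonempty) : transport G F T V = [] :=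
  dif_neg h

lemma transport_map (hFV : ∀ g ∈ G, F.map ⇑g = F → g ∈ Auto V) {g : Perm Ω} (hg : g ∈ G) :
    transport G F (T.map g) V = stackMap g (transport G F T V) := by
  by_cases h : (transporters G F T).Nonempty
  · obtain ⟨a, ha⟩ := h
    rw [transport_eq_stackMap hFV ha, transport_eq_stackMap hFV (mul_mem_transporters_map hg ha),
      stackMap_mul]
  · rw [transport_eq_nil h, transport_eq_nil (mt (transporters_map_nonempty_iff hg).1 h)]
    rfl

end Transporters

theorem stmt_16_general {Ω L : Type*} (G : Subgroup (Equiv.Perm Ω))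
    (Fx : FixedApprox Ω L) (V : ℕ → Stack Ω L) (F : ℕ → List Ω)
    (hFV : ∀ i : ℕ, ∀ g ∈ G, (F i).map ⇑g = F i → g ∈ Auto (V i)) :
    ∃ f : Stack Ω L → Stack Ω L,
      (∀ S : Stack Ω L,
        (∀ a ∈ G, (F S.length).map ⇑a = Fx.fixedL S →
          f S = stackMap a (V S.length)) ∧
        ((¬ ∃ a ∈ G, (F S.length).map ⇑a = Fx.fixedL S) → f S = [])) ∧
      (∀ g ∈ G, ∀ S : Stack Ω L, f (stackMap g S) = stackMap g (f S)) := by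
  refine ⟨fun S => transport G (F S.length) (Fx.fixedL S) (V S.length),
    fun S => ⟨fun a ha hFa => transport_eq_stackMap (hFV _) ⟨ha, hFa⟩, transport_eq_nil⟩,
    fun g hg S => ?_⟩
  simp only [length_stackMap, ← Fx.equivariant]
  exact transport_map (hFV _) hg

/-- given `G ≤ Sym(Ω)`, a fixed-point approximator `Fx`, and for each
`i` a stack `Vᵢ` and a list `Fᵢ` of points whose pointwise stabiliser in `G` lies in
`Aut(Vᵢ)`, there is a well-defined function `f` with
`f(S) = (V_{|S|})^a` whenever `a ∈ G` maps `F_{|S|}` entrywise to `Fixed(S)`, and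
`f(S) = []` when no such `a` exists; and `(f, f)` is a refiner for `G`, i.e.
`f(S^g) = f(S)^g` for all `g ∈ G` and all stacks `S`. -/
theorem stmt_16 {Ω L : Type*} [Fintype Ω] (G : Subgroup (Equiv.Perm Ω))
    (Fx : FixedApprox Ω L) (V : ℕ → Stack Ω L) (F : ℕ → List Ω)
    (hFV : ∀ i : ℕ, ∀ g ∈ G, (F i).map ⇑g = F i → g ∈ Auto (V i)) :
    ∃ f : Stack Ω L → Stack Ω L,
      (∀ S : Stack Ω L,
        (∀ a ∈ G, (F S.length).map ⇑a = Fx.fixedL S →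
          f S = stackMap a (V S.length)) ∧
        ((¬ ∃ a ∈ G, (F S.length).map ⇑a = Fx.fixedL S) → f S = [])) ∧
      (∀ g ∈ G, ∀ S : Stack Ω L, f (stackMap g S) = stackMap g (f S)) :=
  stmt_16_general G Fx V F hFV
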